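/- arXiv:1601.06928 — 3 statements merged into one kernel-verified Lean document; each statement's English description precedes it below -/
import Mathlib

section
/- Let N be a positive integer and for each j ≥ 0 let P_j denote the set of positive divisors d of N with Ω(d) = j, where Ω(d) is the number of prime factors of d counted with multiplicity. For a subset S ⊆ P_j define the neighborhood N(S) = {y ∈ P_{j+1} : there exists x ∈ S with x dividing y}. If |P_j| ≤ |P_{j+1}|, then for every subset S ⊆ P_j one has |S| ≤ |N(S)|. -/
/-!
The divisor lattice of `N` has a symmetric chain decomposition (de Bruijn, Tengbergen and
Kruyswijk): writing `N = p ^ k * a` with `p ∤ a`, the lattice is the product of that of `a` with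
the chain `1 ∣ p ∣ ⋯ ∣ p ^ k`, and each product of a symmetric chain with a chain splits into
symmetric hooks. If some chain ended at rank `j`, symmetry would force `j ≥ Ω N / 2`; then every
element of rank `j + 1` has a predecessor on its chain, which gives an injection of rank `j + 1`
into rank `j` that misses the end of that chain, contradicting `|P_j| ≤ |P_{j+1}|`. So every chain
through rank `j` continues, and following the chains maps `S` injectively into `N(S)`.
-/

open ArithmeticFunction Finset
open scoped ArithmeticFunction.Omega

/-- The level sets of the divisor lattice of `N`: the set of positive divisors `d` of `N`
with `Ω d = j`, where `Ω` counts prime factors with multiplicity. -/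
def divisorLevel (N : ℕ) (j : ℕ) : Finset ℕ :=
  N.divisors.filter (fun d => d.primeFactorsList.length = j)

/-- The neighborhood of `S ⊆ P_j` inside `P_{j+1}`: all `y ∈ P_{j+1}` divisible by some
element of `S`. -/
def divisorNeighbor (N : ℕ) (j : ℕ) (S : Finset ℕ) : Finset ℕ :=
  (divisorLevel N (j + 1)).filter (fun y => ∃ x ∈ S, x ∣ y)

/-- A symmetric chain decomposition of `s`, graded by `rk` with top rank `n`, whose chains step
along `r`. A chain is encoded by the partial successor map `next`; `low x` is the rank of the
bottom of the chain through `x`, and symmetry says that its top has rank `n - low x`. -/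
structure SymmetricChainDecomposition {α : Type*} (s : Finset α) (rk : α → ℕ) (n : ℕ)
    (r : α → α → Prop) where
  next : α → Option α
  low : α → ℕ
  next_spec : ∀ x ∈ s, ∀ y, next x = some y → y ∈ s ∧ r x y ∧ rk y = rk x + 1 ∧ low y = low x
  next_injOn : ∀ x ∈ s, ∀ x' ∈ s, ∀ y, next x = some y → next x' = some y → x = x'
  rk_add_low_of_next_eq_none : ∀ x ∈ s, next x = none → rk x + low x = n
  exists_next_eq_of_low_ne : ∀ y ∈ s, low y ≠ rk y → ∃ x ∈ s, next x = some y
  low_le_rk : ∀ x ∈ s, low x ≤ rk x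
  rk_add_low_le : ∀ x ∈ s, rk x + low x ≤ n

namespace SymmetricChainDecomposition

variable {α : Type*} {s : Finset α} {rk : α → ℕ} {n : ℕ} {r : α → α → Prop}

theorem card_filter_rk_succ_lt (G : SymmetricChainDecomposition s rk n r) {j : ℕ} {x₀ : α}
    (hx₀ : x₀ ∈ s.filter (rk · = j)) (hnone : G.next x₀ = none) :
    #(s.filter (rk · = j + 1)) < #(s.filter (rk · = j)) := by
  classical
  have hx₀s := (mem_filter.mp hx₀).1
  have hn : n ≤ 2 * j := by
    have := G.rk_add_low_of_next_eq_none x₀ hx₀s hnone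
    have := G.low_le_rk x₀ hx₀s
    have := (mem_filter.mp hx₀).2
    omega
  -- Above the middle rank every element of a chain has a predecessor, and none of them is `x₀`.
  have hsurj : Set.SurjOn G.next ((s.filter (rk · = j)).erase x₀)
      ((s.filter (rk · = j + 1)).map .some) := by
    intro _ hy
    rw [coe_map] at hy
    obtain ⟨y, hy, rfl⟩ := hy
    rw [mem_coe, mem_filter] at hy
    have := G.rk_add_low_le y hy.1
    obtain ⟨x, hx, hxy⟩ := G.exists_next_eq_of_low_ne y hy.1 (by omega)
    have := (G.next_spec x hx y hxy).2.2.1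
    refine ⟨x, ?_, hxy⟩
    simp only [coe_erase, Set.mem_sdiff, mem_coe, mem_filter, Set.mem_singleton_iff]
    exact ⟨⟨hx, by omega⟩, by rintro rfl; simp [hnone] at hxy⟩
  have := card_le_card_of_surjOn _ hsurj
  rw [card_map, card_erase_of_mem hx₀] at this
  have := card_pos.mpr ⟨x₀, hx₀⟩
  omega

theorem exists_next_eq_some_of_card_le (G : SymmetricChainDecomposition s rk n r) {j : ℕ}
    (hcard : #(s.filter (rk · = j)) ≤ #(s.filter (rk · = j + 1)))
    {x : α} (hx : x ∈ s.filter (rk · = j)) : ∃ y, G.next x = some y := by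
  rw [← Option.ne_none_iff_exists']
  intro hnone
  exact (G.card_filter_rk_succ_lt hx hnone).not_ge hcard

theorem card_le_card_filter_exists_rel [DecidableRel r] (G : SymmetricChainDecomposition s rk n r)
    {j : ℕ} (hcard : #(s.filter (rk · = j)) ≤ #(s.filter (rk · = j + 1)))
    {S : Finset α} (hS : S ⊆ s.filter (rk · = j)) :
    #S ≤ #((s.filter (rk · = j + 1)).filter (fun y => ∃ x ∈ S, r x y)) := by
  have hmaps : Set.MapsTo G.next S
      (((s.filter (rk · = j + 1)).filter (fun y => ∃ x ∈ S, r x y)).map .some) := by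
    intro x hxS
    have hx := hS hxS
    obtain ⟨y, hxy⟩ := G.exists_next_eq_some_of_card_le hcard hx
    rw [mem_filter] at hx
    obtain ⟨hy, hrel, hrk, -⟩ := G.next_spec x hx.1 y hxy
    rw [hxy]
    simp only [coe_map, Set.mem_image, mem_coe, mem_filter, Function.Embedding.some_apply,
      Option.some_inj, exists_eq_right]
    exact ⟨⟨hy, by omega⟩, x, hxS, hrel⟩
  have hinj : Set.InjOn G.next S := by
    intro x hx x' hx' h
    obtain ⟨y, hxy⟩ := G.exists_next_eq_some_of_card_le hcard (hS hx)
    exact G.next_injOn x (mem_filter.mp (hS hx)).1 x' (mem_filter.mp (hS hx')).1 y hxy (h ▸ hxy)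
  simpa using card_le_card_of_injOn _ hmaps hinj

def empty : SymmetricChainDecomposition ∅ rk n r where
  next _ := none
  low _ := 0
  next_spec := by simp
  next_injOn := by simp
  rk_add_low_of_next_eq_none := by simp
  exists_next_eq_of_low_ne := by simp
  low_le_rk := by simp
  rk_add_low_le := by simp

def singleton (x : α) : SymmetricChainDecomposition {x} rk (2 * rk x) r where
  next _ := none
  low _ := rk x
  next_spec := by simp
  next_injOn := by simp
  rk_add_low_of_next_eq_none := by simp; omega
  exists_next_eq_of_low_ne := by simp
  low_le_rk := by simp
  rk_add_low_le := by simp; omega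

/-- de Bruijn–Tengbergen–Kruyswijk: the grid `C × {0, …, a}` over a chain `C = c₀ < ⋯ < cₗ`
splits into the hooks `(cₖ, 0) < ⋯ < (cₖ, a - k) < (cₖ₊₁, a - k) < ⋯ < (cₗ, a - k)`.
Here `rk x - low x` is the position of `x` in its chain. -/
def prodRange (G : SymmetricChainDecomposition s rk n r) (a : ℕ) :
    SymmetricChainDecomposition (s ×ˢ range (a + 1)) (fun x => rk x.1 + x.2) (n + a)
      (fun x y => r x.1 y.1 ∧ x.2 = y.2 ∨ x.1 = y.1 ∧ y.2 = x.2 + 1) where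
  next x :=
    if rk x.1 - G.low x.1 + x.2 < a then some (x.1, x.2 + 1) else (G.next x.1).map (·, x.2)
  low x := G.low x.1 + min (rk x.1 - G.low x.1) (a - x.2)
  next_spec := by
    rintro ⟨x, t⟩ hxt y hy
    simp only [mem_product, mem_range] at hxt
    have := G.low_le_rk x hxt.1
    dsimp only at hy
    split_ifs at hy with hup
    · cases hy
      dsimp only
      exact ⟨by simp [hxt.1]; omega, .inr ⟨rfl, rfl⟩, by omega, by omega⟩
    · obtain ⟨z, hz, rfl⟩ := Option.map_eq_some_iff.mp hy
      obtain ⟨hzs, hrel, hrk, hlow⟩ := G.next_spec x hxt.1 z hz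
      dsimp only
      exact ⟨by simp [hzs, hxt.2], .inl ⟨hrel, rfl⟩, by omega, by omega⟩
  next_injOn := by
    rintro ⟨x, t⟩ hxt ⟨x', t'⟩ hxt' y hy hy'
    simp only [mem_product, mem_range] at hxt hxt'
    dsimp only at hy hy'
    split_ifs at hy hy' with hup hup'
    · cases hy; cases hy'; rfl
    · -- a vertical step into `y` and a horizontal one would put `y` on two different hooks
      cases hy
      obtain ⟨z, hz, hzy⟩ := Option.map_eq_some_iff.mp hy'
      cases hzy
      obtain ⟨-, -, hrk, hlow⟩ := G.next_spec x' hxt'.1 x hz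
      have := G.low_le_rk x' hxt'.1
      omega
    · cases hy'
      obtain ⟨z, hz, hzy⟩ := Option.map_eq_some_iff.mp hy
      cases hzy
      obtain ⟨-, -, hrk, hlow⟩ := G.next_spec x hxt.1 x' hz
      have := G.low_le_rk x hxt.1
      omega
    · obtain ⟨z, hz, hzy⟩ := Option.map_eq_some_iff.mp hy
      obtain ⟨z', hz', hzy'⟩ := Option.map_eq_some_iff.mp hy'
      obtain ⟨rfl, rfl⟩ := Prod.ext_iff.mp (hzy.trans hzy'.symm)
      rw [G.next_injOn x hxt.1 x' hxt'.1 z hz hz']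
  rk_add_low_of_next_eq_none := by
    rintro ⟨x, t⟩ hxt hnone
    simp only [mem_product, mem_range] at hxt
    dsimp only at hnone ⊢
    split_ifs at hnone with hup
    have := G.rk_add_low_of_next_eq_none x hxt.1 (Option.map_eq_none_iff.mp hnone)
    omega
  exists_next_eq_of_low_ne := by
    rintro ⟨y, u⟩ hyu hne
    simp only [mem_product, mem_range] at hyu
    dsimp only at hne ⊢
    have := G.low_le_rk y hyu.1
    by_cases hup : rk y - G.low y + u ≤ a
    · refine ⟨(y, u - 1), by simp [hyu.1]; omega, ?_⟩
      dsimp only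
      rw [if_pos (by omega)]
      congr
      omega
    · obtain ⟨x, hx, hxy⟩ := G.exists_next_eq_of_low_ne y hyu.1 (by omega)
      obtain ⟨-, -, hrk, hlow⟩ := G.next_spec x hx y hxy
      refine ⟨(x, u), by simp [hx, hyu.2], ?_⟩
      dsimp only
      rw [if_neg (by omega), hxy, Option.map_some]
  low_le_rk := by
    rintro ⟨x, t⟩ hxt
    have := G.low_le_rk x (mem_product.mp hxt).1
    dsimp only
    omega
  rk_add_low_le := by
    rintro ⟨x, t⟩ hxt
    simp only [mem_product, mem_range] at hxt
    have := G.low_le_rk x hxt.1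
    have := G.rk_add_low_le x hxt.1
    dsimp only
    omega

def map {β : Type*} {t : Finset β} {rk' : β → ℕ} {r' : β → β → Prop}
    (G : SymmetricChainDecomposition s rk n r) (f : α → β) (g : β → α)
    (hf : Set.MapsTo f s t) (hg : Set.MapsTo g t s) (hgf : Set.InvOn g f s t)
    (hrk : ∀ x ∈ s, rk' (f x) = rk x) (hr : ∀ x ∈ s, ∀ y ∈ s, r x y → r' (f x) (f y)) :
    SymmetricChainDecomposition t rk' n r' where
  next y := (G.next (g y)).map f
  low y := G.low (g y)
  next_spec := by
    intro y hy z hz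
    obtain ⟨x, hx, rfl⟩ := Option.map_eq_some_iff.mp hz
    obtain ⟨hxs, hrel, hrk', hlow⟩ := G.next_spec (g y) (hg hy) x hx
    have hfg : f (g y) = y := hgf.2 hy
    refine ⟨hf hxs, hfg ▸ hr _ (hg hy) _ hxs hrel, ?_, ?_⟩
    · rw [hrk x hxs, hrk', ← hrk _ (hg hy), hfg]
    · rw [hgf.1 hxs, hlow]
  next_injOn := by
    intro y hy y' hy' z hz hz'
    obtain ⟨x, hx, rfl⟩ := Option.map_eq_some_iff.mp hz
    obtain ⟨x', hx', hxx'⟩ := Option.map_eq_some_iff.mp hz'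
    have hxs := (G.next_spec _ (hg hy) x hx).1
    have hxs' := (G.next_spec _ (hg hy') x' hx').1
    obtain rfl : x = x' := by rw [← hgf.1 hxs, ← hgf.1 hxs', hxx']
    rw [← hgf.2 hy, ← hgf.2 hy', G.next_injOn _ (hg hy) _ (hg hy') _ hx hx']
  rk_add_low_of_next_eq_none := by
    intro y hy hnone
    rw [← hgf.2 hy, hrk _ (hg hy), hgf.1 (hg hy)]
    exact G.rk_add_low_of_next_eq_none _ (hg hy) (Option.map_eq_none_iff.mp hnone)
  exists_next_eq_of_low_ne := by
    intro y hy hne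
    rw [← hgf.2 hy, hrk _ (hg hy), hgf.1 (hg hy)] at hne
    obtain ⟨x, hx, hxy⟩ := G.exists_next_eq_of_low_ne _ (hg hy) hne
    refine ⟨f x, hf hx, ?_⟩
    simp only [hgf.1 hx, hxy, Option.map_some, hgf.2 hy]
  low_le_rk := by
    intro y hy
    rw [← hgf.2 hy, hrk _ (hg hy), hgf.1 (hg hy)]
    exact G.low_le_rk _ (hg hy)
  rk_add_low_le := by
    intro y hy
    rw [← hgf.2 hy, hrk _ (hg hy), hgf.1 (hg hy)]
    exact G.rk_add_low_le _ (hg hy)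

end SymmetricChainDecomposition

namespace Nat

variable {p a k : ℕ}

theorem Prime.factorization_pow_mul_of_not_dvd (hp : p.Prime) (hpa : ¬p ∣ a) (k : ℕ) :
    (p ^ k * a).factorization p = k := by
  have ha : a ≠ 0 := by rintro rfl; exact hpa (dvd_zero p)
  rw [factorization_mul (pow_ne_zero _ hp.ne_zero) ha, hp.factorization_pow, Finsupp.add_apply,
    Finsupp.single_eq_same, factorization_eq_zero_of_not_dvd hpa, add_zero]

theorem mapsTo_pow_mul_divisors (hp : p.Prime) (ha : a ≠ 0) :
    Set.MapsTo (fun x : ℕ × ℕ => p ^ x.2 * x.1)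
      ((a.divisors ×ˢ range (k + 1) : Finset (ℕ × ℕ)) : Set (ℕ × ℕ)) (p ^ k * a).divisors := by
  intro ⟨e, t⟩ h
  simp only [mem_coe, mem_product, mem_divisors, mem_range] at h ⊢
  exact ⟨mul_dvd_mul (pow_dvd_pow p (by omega)) h.1.1, mul_ne_zero (pow_ne_zero _ hp.ne_zero) ha⟩

theorem mapsTo_ordCompl_factorization_divisors (hp : p.Prime) (hpa : ¬p ∣ a) :
    Set.MapsTo (fun d => (ordCompl[p] d, d.factorization p)) (p ^ k * a).divisors
      ((a.divisors ×ˢ range (k + 1) : Finset (ℕ × ℕ)) : Set (ℕ × ℕ)) := by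
  intro d hd
  have hN := (mem_divisors.mp hd).2
  have hd0 : d ≠ 0 := ne_zero_of_dvd_ne_zero hN (mem_divisors.mp hd).1
  have hcompl := ordCompl_dvd_ordCompl_of_dvd (mem_divisors.mp hd).1 p
  rw [ordCompl_pow_mul_of_not_dvd k hp hpa] at hcompl
  have hfac := (factorization_le_iff_dvd hd0 hN).2 (mem_divisors.mp hd).1 p
  rw [hp.factorization_pow_mul_of_not_dvd hpa] at hfac
  simp only [mem_coe, mem_product, mem_divisors, mem_range]
  exact ⟨⟨hcompl, right_ne_zero_of_mul hN⟩, by omega⟩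

theorem invOn_ordCompl_factorization_pow_mul (hp : p.Prime) (hpa : ¬p ∣ a) :
    Set.InvOn (fun d => (ordCompl[p] d, d.factorization p)) (fun x : ℕ × ℕ => p ^ x.2 * x.1)
      ((a.divisors ×ˢ range (k + 1) : Finset (ℕ × ℕ)) : Set (ℕ × ℕ)) (p ^ k * a).divisors := by
  refine ⟨?_, fun d _ => ordProj_mul_ordCompl_eq_self d p⟩
  rintro ⟨e, t⟩ h
  have hpe : ¬p ∣ e := fun hpe => hpa (hpe.trans (mem_divisors.mp (mem_product.mp h).1).1)
  exact Prod.ext (ordCompl_pow_mul_of_not_dvd t hp hpe) (hp.factorization_pow_mul_of_not_dvd hpe t)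

theorem nonempty_symmetricChainDecomposition_divisors (N : ℕ) :
    Nonempty (SymmetricChainDecomposition N.divisors Ω (Ω N) (· ∣ ·)) := by
  induction N using recOnPrimePow with
  | zero =>
    rw [divisors_zero]
    exact ⟨.empty⟩
  | one =>
    rw [divisors_one, show Ω 1 = 2 * Ω 1 by simp]
    exact ⟨.singleton 1⟩
  | prime_pow_mul a p k hp hpa _ ih =>
    have ha : a ≠ 0 := by rintro rfl; exact hpa (dvd_zero p)
    obtain ⟨G⟩ := ih
    rw [cardFactors_mul (pow_ne_zero _ hp.ne_zero) ha, cardFactors_apply_prime_pow hp, add_comm]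
    refine ⟨(G.prodRange k).map _ _ (mapsTo_pow_mul_divisors hp ha)
      (mapsTo_ordCompl_factorization_divisors hp hpa) (invOn_ordCompl_factorization_pow_mul hp hpa)
      ?_ ?_⟩
    · rintro ⟨e, t⟩ h
      have he : e ≠ 0 := (pos_of_mem_divisors (mem_product.mp h).1).ne'
      rw [cardFactors_mul (pow_ne_zero _ hp.ne_zero) he, cardFactors_apply_prime_pow hp, add_comm]
    · rintro ⟨e, t⟩ - ⟨e', t'⟩ - (⟨hee', rfl⟩ | ⟨rfl, rfl⟩)
      · exact mul_dvd_mul_left _ hee'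
      · exact mul_dvd_mul_right (pow_dvd_pow p t.le_succ) e

end Nat

theorem divisorLevel_eq_filter_cardFactors (N j : ℕ) :
    divisorLevel N j = N.divisors.filter (Ω · = j) :=
  filter_congr fun d _ => by rw [cardFactors_apply]

theorem divisorLattice_matching_general (N : ℕ) (j : ℕ)
    (hcard : (divisorLevel N j).card ≤ (divisorLevel N (j + 1)).card)
    (S : Finset ℕ) (hS : S ⊆ divisorLevel N j) :
    S.card ≤ (divisorNeighbor N j S).card := by
  obtain ⟨G⟩ := Nat.nonempty_symmetricChainDecomposition_divisors N
  simp only [divisorLevel_eq_filter_cardFactors] at hcard hS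
  simpa only [divisorNeighbor, divisorLevel_eq_filter_cardFactors] using
    G.card_le_card_filter_exists_rel hcard hS

/-- **Normalized matching property of the divisor lattice.** If `|P_j| ≤ |P_{j+1}|`, then for
every subset `S ⊆ P_j` one has `|S| ≤ |N(S)|`. -/
theorem divisorLattice_matching (N : ℕ) (hN : 0 < N) (j : ℕ)
    (hcard : (divisorLevel N j).card ≤ (divisorLevel N (j + 1)).card)
    (S : Finset ℕ) (hS : S ⊆ divisorLevel N j) :
    S.card ≤ (divisorNeighbor N j S).card :=
  divisorLattice_matching_general N j hcard S hS
end

section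
/- Let A = ⊕_{i=0}^c A_i be a graded Artinian Gorenstein algebra over a field K = A_0 with unimodal Hilbert function which has the matching property, and let m = ⊕_{i≥1} A_i. Let I = ⊕_{j≥α} I_j be a graded ideal of A with initial degree α (so I_α ≠ 0), and put I' = ⊕_{j≥α+1} I_j. Let j_0 = min{j : dim_K A_j > dim_K A_{j+1}} and assume α < j_0. Then μ(I) ≤ μ(I'); in particular, if μ(I) equals the Dilworth number d(A), then so does μ(I'). -/
open Module

/-- `μ(I) = dim_K I/mI`, the minimal number of generators of an ideal `I` of a graded algebra
`A` over `K` with graded maximal ideal `m`. -/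
noncomputable def nu (K : Type*) {A : Type*} [Field K] [CommRing A] [Algebra K A]
    (m I : Ideal A) : ℕ :=
  finrank K
    (↥(I.restrictScalars K) ⧸
      (Submodule.comap (I.restrictScalars K).subtype ((m * I).restrictScalars K)))

/-- For subspaces `W, V` of a `K`-algebra `A`, the `K`-span of `{x * v : x ∈ W, v ∈ V}`. -/
noncomputable def mulSpan {K A : Type*} [Field K] [CommRing A] [Algebra K A]
    (W V : Submodule K A) : Submodule K A :=
  Submodule.span K {z | ∃ x ∈ W, ∃ v ∈ V, z = x * v}

/-!
Write `m` for the irrelevant ideal and `I' = I_{≥ α+1}`. As vector spaces `I = I_α ⊕ I'`, while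
`m I` contains `A_1 I_α ⊕ m I'`, the two summands living in degree `α + 1` and in degrees
`≥ α + 2`. Since `dim A_α ≤ dim A_{α+1}` below the peak `j₀`, the matching property gives
`dim A_1 I_α ≥ dim I_α`, hence
`μ(I) = dim I - dim m I ≤ dim I_α + dim I' - dim I_α - dim m I' = μ(I')`.
-/

namespace GradedAlgebra

section Semiring

variable {R A : Type*} [CommSemiring R] [Semiring A] [Algebra R A] (𝒜 : ℕ → Submodule R A)

def degreesGE (n : ℕ) : Submodule R A := ⨆ j ≥ n, 𝒜 j

def truncation (I : Ideal A) (n : ℕ) : Ideal A :=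
  Ideal.span {x | ∃ j, n ≤ j ∧ x ∈ I ∧ x ∈ 𝒜 j}

variable {𝒜}

lemma truncation_le (I : Ideal A) (n : ℕ) : truncation 𝒜 I n ≤ I :=
  Ideal.span_le.mpr fun _ ⟨_, _, hx, _⟩ => hx

lemma le_degreesGE {n j : ℕ} (h : n ≤ j) : 𝒜 j ≤ degreesGE 𝒜 n :=
  le_iSup₂ (f := fun j (_ : j ≥ n) => 𝒜 j) j h

variable [GradedAlgebra 𝒜]

lemma degreesGE_zero : degreesGE 𝒜 0 = ⊤ :=
  top_le_iff.mp <| (DirectSum.Decomposition.isInternal 𝒜).submodule_iSup_eq_top.ge.trans <|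
    iSup_le fun j => le_degreesGE (Nat.zero_le j)

lemma degreesGE_mul_le (a b : ℕ) : degreesGE 𝒜 a * degreesGE 𝒜 b ≤ degreesGE 𝒜 (a + b) := by
  unfold degreesGE
  rw [Submodule.iSup_mul]
  refine iSup_le fun i => ?_
  rw [Submodule.iSup_mul]
  refine iSup_le fun hi => ?_
  rw [Submodule.mul_iSup]
  refine iSup_le fun j => ?_
  rw [Submodule.mul_iSup]
  refine iSup_le fun hj => ?_
  exact Submodule.mul_le.mpr fun x hx y hy =>
    le_degreesGE (add_le_add hi hj) (SetLike.mul_mem_graded hx hy)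

lemma disjoint_degreesGE_succ (n : ℕ) : Disjoint (𝒜 n) (degreesGE 𝒜 (n + 1)) :=
  ((DirectSum.Decomposition.isInternal 𝒜).submodule_iSupIndep n).mono_right <|
    iSup₂_le fun j hj => le_iSup₂ (f := fun j (_ : j ≠ n) => 𝒜 j) j (by omega)

variable (𝒜) in
def degreesGEIdeal (n : ℕ) : Ideal A where
  __ := degreesGE 𝒜 n
  smul_mem' a x hx := by
    simpa using degreesGE_mul_le 0 n
      (Submodule.mul_mem_mul (degreesGE_zero (𝒜 := 𝒜) ▸ Submodule.mem_top) hx)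

lemma truncation_le_degreesGEIdeal (I : Ideal A) (n : ℕ) :
    truncation 𝒜 I n ≤ degreesGEIdeal 𝒜 n :=
  Ideal.span_le.mpr fun _ ⟨_, hj, _, hx⟩ => le_degreesGE hj hx

lemma inf_sup_truncation_succ_eq {I : Ideal A} (hI : I.IsHomogeneous 𝒜) {n : ℕ}
    (hbelow : ∀ j < n, I.restrictScalars R ⊓ 𝒜 j = ⊥) :
    I.restrictScalars R ⊓ 𝒜 n ⊔ (truncation 𝒜 I (n + 1)).restrictScalars R =
      I.restrictScalars R := by
  classical
  refine le_antisymm (sup_le inf_le_left fun x hx => truncation_le I _ hx) fun x hx => ?_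
  rw [← DirectSum.sum_support_decompose 𝒜 x]
  refine Submodule.sum_mem _ fun i _ => ?_
  have hxi : (DirectSum.decompose 𝒜 x i : A) ∈ I.restrictScalars R ⊓ 𝒜 i :=
    ⟨hI i hx, SetLike.coe_mem _⟩
  rcases lt_trichotomy i n with h | rfl | h
  · rw [hbelow i h, Submodule.mem_bot] at hxi
    exact hxi ▸ Submodule.zero_mem _
  · exact Submodule.mem_sup_left hxi
  · exact Submodule.mem_sup_right (Ideal.subset_span ⟨i, h, hxi⟩)

end Semiring

section CommSemiring

variable {R A : Type*} [CommSemiring R] [CommSemiring A] [Algebra R A]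
  {𝒜 : ℕ → Submodule R A} [GradedAlgebra 𝒜]

lemma irrelevant_le_degreesGEIdeal_one :
    (HomogeneousIdeal.irrelevant 𝒜).toIdeal ≤ degreesGEIdeal 𝒜 1 :=
  (HomogeneousIdeal.toIdeal_irrelevant_le 𝒜).mpr fun _ hi _ hx => le_degreesGE hi hx

lemma irrelevant_mul_le_degreesGEIdeal {J : Ideal A} {n : ℕ} (hJ : J ≤ degreesGEIdeal 𝒜 n) :
    (HomogeneousIdeal.irrelevant 𝒜).toIdeal * J ≤ degreesGEIdeal 𝒜 (n + 1) :=
  Ideal.mul_le.mpr fun _ hr _ hs => by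
    have h := degreesGE_mul_le 1 n
      (Submodule.mul_mem_mul (irrelevant_le_degreesGEIdeal_one hr) (hJ hs))
    rwa [add_comm] at h

end CommSemiring

section Field

variable {K A : Type*} [Field K] [CommRing A] [Algebra K A]
  {𝒜 : ℕ → Submodule K A} [GradedAlgebra 𝒜]

lemma mulSpan_eq_mul (W V : Submodule K A) : mulSpan W V = W * V := by
  rw [Submodule.mul_eq_span_mul_set, mulSpan]
  congr 1
  ext z
  simp [Set.mem_mul, eq_comm]

lemma nu_eq_finrank_sub_finrank [FiniteDimensional K A] (m I : Ideal A) :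
    nu K m I = finrank K (I.restrictScalars K) - finrank K ((m * I).restrictScalars K) := by
  have hle : (m * I).restrictScalars K ≤ I.restrictScalars K :=
    Submodule.restrictScalars_mono _ Ideal.mul_le_right
  rw [nu, ← Submodule.finrank_quotient_add_finrank
    (Submodule.comap (I.restrictScalars K).subtype ((m * I).restrictScalars K)),
    (Submodule.comapSubtypeEquivOfLe hle).finrank_eq, Nat.add_sub_cancel]

variable [FiniteDimensional K A]

lemma finrank_eq_finrank_inf_add_finrank_truncation {I : Ideal A} (hI : I.IsHomogeneous 𝒜)
    {n : ℕ} (hbelow : ∀ j < n, I.restrictScalars K ⊓ 𝒜 j = ⊥) :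
    finrank K (I.restrictScalars K) = finrank K ↥(I.restrictScalars K ⊓ 𝒜 n) +
      finrank K ((truncation 𝒜 I (n + 1)).restrictScalars K) := by
  have hdisj :
      Disjoint (I.restrictScalars K ⊓ 𝒜 n) ((truncation 𝒜 I (n + 1)).restrictScalars K) :=
    (disjoint_degreesGE_succ n).mono inf_le_right (truncation_le_degreesGEIdeal I (n + 1))
  have h := Submodule.finrank_sup_add_finrank_inf_eq
    (I.restrictScalars K ⊓ 𝒜 n) ((truncation 𝒜 I (n + 1)).restrictScalars K)
  rwa [inf_sup_truncation_succ_eq hI hbelow, hdisj.eq_bot, finrank_bot, add_zero] at h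

lemma finrank_mulSpan_add_finrank_mul_truncation_le (I : Ideal A) (n : ℕ) :
    finrank K (mulSpan (𝒜 1) (I.restrictScalars K ⊓ 𝒜 n)) +
      finrank K (((HomogeneousIdeal.irrelevant 𝒜).toIdeal *
        truncation 𝒜 I (n + 1)).restrictScalars K) ≤
    finrank K (((HomogeneousIdeal.irrelevant 𝒜).toIdeal * I).restrictScalars K) := by
  rw [mulSpan_eq_mul]
  set m := (HomogeneousIdeal.irrelevant 𝒜).toIdeal
  set S := 𝒜 1 * (I.restrictScalars K ⊓ 𝒜 n)
  have hS_deg : S ≤ 𝒜 (n + 1) := by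
    rw [add_comm]
    exact Submodule.mul_le.mpr fun x hx v hv => SetLike.mul_mem_graded hx hv.2
  have hS_mul : S ≤ (m * I).restrictScalars K :=
    Submodule.mul_le.mpr fun x hx v hv =>
      Ideal.mul_mem_mul (HomogeneousIdeal.mem_irrelevant_of_mem 𝒜 one_pos hx) hv.1
  have hdisj : Disjoint S ((m * truncation 𝒜 I (n + 1)).restrictScalars K) :=
    (disjoint_degreesGE_succ (n + 1)).mono hS_deg
      (irrelevant_mul_le_degreesGEIdeal (truncation_le_degreesGEIdeal I (n + 1)))
  have hsup : S ⊔ (m * truncation 𝒜 I (n + 1)).restrictScalars K ≤ (m * I).restrictScalars K :=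
    sup_le hS_mul (Ideal.mul_mono_right (truncation_le I _))
  have h :=
    Submodule.finrank_sup_add_finrank_inf_eq S ((m * truncation 𝒜 I (n + 1)).restrictScalars K)
  rw [hdisj.eq_bot, finrank_bot, add_zero] at h
  exact h ▸ Submodule.finrank_mono hsup

theorem nu_le_nu_truncation {I : Ideal A} (hI : I.IsHomogeneous 𝒜) {α : ℕ}
    (hbelow : ∀ j < α, I.restrictScalars K ⊓ 𝒜 j = ⊥)
    (hmatch : finrank K ↥(I.restrictScalars K ⊓ 𝒜 α) ≤
      finrank K (mulSpan (𝒜 1) (I.restrictScalars K ⊓ 𝒜 α))) :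
    nu K (HomogeneousIdeal.irrelevant 𝒜).toIdeal I ≤
      nu K (HomogeneousIdeal.irrelevant 𝒜).toIdeal (truncation 𝒜 I (α + 1)) := by
  have hI_dim := finrank_eq_finrank_inf_add_finrank_truncation hI hbelow
  have hmI_dim := finrank_mulSpan_add_finrank_mul_truncation_le (𝒜 := 𝒜) I α
  have hmI' : finrank K (((HomogeneousIdeal.irrelevant 𝒜).toIdeal *
      truncation 𝒜 I (α + 1)).restrictScalars K) ≤
      finrank K ((truncation 𝒜 I (α + 1)).restrictScalars K) :=
    Submodule.finrank_mono (Submodule.restrictScalars_mono _ Ideal.mul_le_right)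
  rw [nu_eq_finrank_sub_finrank, nu_eq_finrank_sub_finrank]
  omega

end Field

end GradedAlgebra

open GradedAlgebra in
theorem truncation_sublemma_general {K A : Type*} [Field K] [CommRing A] [Algebra K A]
    (𝒜 : ℕ → Submodule K A) [GradedAlgebra 𝒜]
    [FiniteDimensional K A]
    (hmatching : ∀ j : ℕ, finrank K (𝒜 j) ≤ finrank K (𝒜 (j + 1)) →
      ∀ V : Submodule K A, V ≤ 𝒜 j → finrank K V ≤ finrank K (mulSpan (𝒜 1) V))
    (I : Ideal A) (hIhom : I.IsHomogeneous 𝒜)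
    (α : ℕ)
    (hbelow : ∀ j < α, I.restrictScalars K ⊓ 𝒜 j = ⊥)
    (I' : Ideal A)
    (hI' : I' = Ideal.span {x | ∃ j, α + 1 ≤ j ∧ x ∈ I ∧ x ∈ 𝒜 j})
    (j₀ : ℕ) (hj₀ : IsLeast {j : ℕ | finrank K (𝒜 (j + 1)) < finrank K (𝒜 j)} j₀)
    (hα : α < j₀)
    (d : ℕ)
    (hd : IsGreatest {e : ℕ | ∃ J : Ideal A,
      nu K (HomogeneousIdeal.irrelevant 𝒜).toIdeal J = e} d) :
    nu K (HomogeneousIdeal.irrelevant 𝒜).toIdeal I ≤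
      nu K (HomogeneousIdeal.irrelevant 𝒜).toIdeal I' ∧
    (nu K (HomogeneousIdeal.irrelevant 𝒜).toIdeal I = d →
      nu K (HomogeneousIdeal.irrelevant 𝒜).toIdeal I' = d) := by
  have hgrow : finrank K (𝒜 α) ≤ finrank K (𝒜 (α + 1)) :=
    not_lt.mp fun h => (hj₀.2 h).not_gt hα
  have hle : nu K (HomogeneousIdeal.irrelevant 𝒜).toIdeal I ≤
      nu K (HomogeneousIdeal.irrelevant 𝒜).toIdeal I' :=
    hI' ▸ nu_le_nu_truncation hIhom hbelow (hmatching α hgrow _ inf_le_right)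
  exact ⟨hle, fun hId => le_antisymm (hd.2 ⟨I', rfl⟩) (hId ▸ hle)⟩

/-- **Truncation does not decrease the number of generators below the peak.**
Let `A = ⊕_{i=0}^c A_i` be a graded Artinian Gorenstein algebra over `K = A_0` with unimodal
Hilbert function and the matching property.  Let `I` be a graded ideal with initial degree
`α`, and let `I' = ⊕_{j ≥ α+1} I_j` be its truncation.  If
`α < j₀ = min{j : dim_K A_j > dim_K A_{j+1}}`, then `μ(I) ≤ μ(I')`; in particular if
`μ(I)` equals the Dilworth number `d(A)` then so does `μ(I')`. -/
theorem truncation_sublemma {K A : Type*} [Field K] [CommRing A] [Algebra K A]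
    (𝒜 : ℕ → Submodule K A) [GradedAlgebra 𝒜]
    (c : ℕ) (htop : ∀ i, c < i → 𝒜 i = ⊥) [FiniteDimensional K A]
    (hA0 : 𝒜 0 = (1 : Submodule K A))
    (hGor : finrank K
      (((⊥ : Ideal A).colon (HomogeneousIdeal.irrelevant 𝒜).toIdeal).restrictScalars K) = 1)
    (hunimodal : ∃ p : ℕ,
      (∀ i j, i ≤ j → j ≤ p → finrank K (𝒜 i) ≤ finrank K (𝒜 j)) ∧
      (∀ i j, p ≤ i → i ≤ j → finrank K (𝒜 j) ≤ finrank K (𝒜 i)))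
    (hmatching : ∀ j : ℕ, finrank K (𝒜 j) ≤ finrank K (𝒜 (j + 1)) →
      ∀ V : Submodule K A, V ≤ 𝒜 j → finrank K V ≤ finrank K (mulSpan (𝒜 1) V))
    (I : Ideal A) (hIhom : I.IsHomogeneous 𝒜)
    (α : ℕ) (hinit : I.restrictScalars K ⊓ 𝒜 α ≠ ⊥)
    (hbelow : ∀ j < α, I.restrictScalars K ⊓ 𝒜 j = ⊥)
    (I' : Ideal A)
    (hI' : I' = Ideal.span {x | ∃ j, α + 1 ≤ j ∧ x ∈ I ∧ x ∈ 𝒜 j})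
    (j₀ : ℕ) (hj₀ : IsLeast {j : ℕ | finrank K (𝒜 (j + 1)) < finrank K (𝒜 j)} j₀)
    (hα : α < j₀)
    (d : ℕ)
    (hd : IsGreatest {e : ℕ | ∃ J : Ideal A,
      nu K (HomogeneousIdeal.irrelevant 𝒜).toIdeal J = e} d) :
    nu K (HomogeneousIdeal.irrelevant 𝒜).toIdeal I ≤
      nu K (HomogeneousIdeal.irrelevant 𝒜).toIdeal I' ∧
    (nu K (HomogeneousIdeal.irrelevant 𝒜).toIdeal I = d →
      nu K (HomogeneousIdeal.irrelevant 𝒜).toIdeal I' = d) :=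
  truncation_sublemma_general 𝒜 hmatching I hIhom α hbelow I' hI' j₀ hj₀ hα d hd
end

section
/- Let K be a field, R = K[x_1,...,x_n], and B = R/(x_1^{a_1},...,x_n^{a_n}) with a_1,...,a_n positive integers, with its standard grading. Let J ⊆ B be an ideal generated by monomials (images of monomials of R). If j is an index with dim_K B_j ≤ dim_K B_{j+1}, then H(J, j) ≤ H(J, j+1), where H(J, i) = dim_K J_i is the Hilbert function of the graded ideal J. -/
open MvPolynomial Module

set_option synthInstance.maxHeartbeats 400000

/-- The degree-`i` homogeneous component of the standard graded quotient `R/b` of the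
polynomial ring `R = K[x_1,…,x_n]` by an ideal `b`: the image of the space of homogeneous
polynomials of degree `i`.  Its dimension is the value `H(R/b, i)` of the Hilbert function. -/
noncomputable def gradedPiece {K : Type*} [Field K] {n : ℕ}
    (b : Ideal (MvPolynomial (Fin n) K)) (i : ℕ) :
    Submodule K (MvPolynomial (Fin n) K ⧸ b) :=
  (homogeneousSubmodule (Fin n) K i).map (Ideal.Quotient.mkₐ K b).toLinearMap

/-- An ideal of `B = R/a` is a monomial ideal if it is generated by images of monomials. -/
def IsMonomialIdealOfQuotient {K : Type*} [Field K] {n : ℕ}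
    (a : Ideal (MvPolynomial (Fin n) K)) (J : Ideal (MvPolynomial (Fin n) K ⧸ a)) : Prop :=
  ∃ M : Set (MvPolynomial (Fin n) K),
    (∀ p ∈ M, ∃ s : Fin n →₀ ℕ, p = monomial s (1 : K)) ∧
    J = Ideal.span ((Ideal.Quotient.mk a) '' M)

/-!
The standard monomials `x^d`, `d` in the box `∏ [0, a_i)`, form a `K`-basis of `B`, and `J ∩ B_t`
has as basis those of degree `t` whose exponent lies in the up-set generated by the exponents of
the generators of `J`.  So both Hilbert functions count lattice points of given rank in the box,
the second one inside an up-set.  A product of chains has a symmetric chain decomposition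
(de Bruijn–Tengbergen–Kruyswijk), built one factor at a time.  If rank `j` is no larger than
rank `j + 1`, no chain ends at rank `j`, so stepping up along the chains injects rank `j` into
rank `j + 1` and only moves elements up; hence it maps the up-set into itself.
-/

open Finset

/-- `c x` labels the chain through `x`; the chain labelled `i` is totally ordered and occupies
exactly the ranks `st i, st i + 1, …, m - st i`. -/
structure IsSymmetricChainDecomposition {α ι : Type*} [PartialOrder α] (s : Finset α)
    (rk : α → ℕ) (m : ℕ) (c : α → ι) (st : ι → ℕ) : Prop where
  rank_bounds : ∀ x ∈ s, st (c x) ≤ rk x ∧ rk x + st (c x) ≤ m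
  le_of_rank_le : ∀ x ∈ s, ∀ y ∈ s, c x = c y → rk x ≤ rk y → x ≤ y
  exists_rank_eq : ∀ x ∈ s, ∀ t, st (c x) ≤ t → t + st (c x) ≤ m →
    ∃ y ∈ s, c y = c x ∧ rk y = t

namespace IsSymmetricChainDecomposition

variable {α β ι : Type*} [PartialOrder α] [PartialOrder β] {s : Finset α} {rk : α → ℕ} {m : ℕ}
  {c : α → ι} {st : ι → ℕ}

theorem eq_of_rank_eq (h : IsSymmetricChainDecomposition s rk m c st) {x y : α} (hx : x ∈ s)
    (hy : y ∈ s) (hc : c x = c y) (hr : rk x = rk y) : x = y :=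
  le_antisymm (h.le_of_rank_le x hx y hy hc hr.le) (h.le_of_rank_le y hy x hx hc.symm hr.ge)

theorem exists_injOn_rank_eq (h : IsSymmetricChainDecomposition s rk m c st) {j t : ℕ}
    (ht : ∀ x ∈ s, rk x = j → st (c x) ≤ t ∧ t + st (c x) ≤ m) :
    ∃ f : α → α, Set.InjOn f ({x ∈ s | rk x = j} : Finset α) ∧
      ∀ x ∈ s, rk x = j → f x ∈ s ∧ c (f x) = c x ∧ rk (f x) = t := by
  have hex : ∀ x ∈ s, rk x = j → ∃ y ∈ s, c y = c x ∧ rk y = t := fun x hx hj =>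
    h.exists_rank_eq x hx t (ht x hx hj).1 (ht x hx hj).2
  choose! f hfs hfc hfr using hex
  refine ⟨f, fun x hx y hy hxy => ?_, fun x hx hj => ⟨hfs x hx hj, hfc x hx hj, hfr x hx hj⟩⟩
  simp only [coe_filter, Set.mem_ofPred_eq] at hx hy
  refine h.eq_of_rank_eq hx.1 hy.1 ?_ (hx.2.trans hy.2.symm)
  rw [← hfc x hx.1 hx.2, ← hfc y hy.1 hy.2, hxy]

theorem rank_add_one_add_le (h : IsSymmetricChainDecomposition s rk m c st) {j : ℕ}
    (hcard : #{x ∈ s | rk x = j} ≤ #{x ∈ s | rk x = j + 1}) {x₀ : α} (hx₀ : x₀ ∈ s)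
    (hj₀ : rk x₀ = j) : j + 1 + st (c x₀) ≤ m := by
  classical
  by_contra hend
  have hb₀ := h.rank_bounds x₀ hx₀
  -- The chain of `x₀` ends at rank `j`, while every chain through rank `j + 1` goes down to `j`.
  obtain ⟨f, hf_inj, hf⟩ := h.exists_injOn_rank_eq (j := j + 1) (t := j) fun y hy hjy => by
    have := h.rank_bounds y hy
    omega
  have hmaps : Set.MapsTo f ({y ∈ s | rk y = j + 1} : Finset α)
      ({x ∈ s | rk x = j}.erase x₀ : Finset α) := by
    intro y hy
    simp only [coe_filter, Set.mem_ofPred_eq] at hy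
    obtain ⟨hfs, hfc, hfr⟩ := hf y hy.1 hy.2
    have hby := h.rank_bounds y hy.1
    simp only [coe_erase, coe_filter, Set.mem_sdiff, Set.mem_ofPred_eq,
      Set.mem_singleton_iff]
    refine ⟨⟨hfs, hfr⟩, fun heq => ?_⟩
    rw [heq] at hfc
    rw [← hfc] at hby
    omega
  have hle := card_le_card_of_injOn f hmaps hf_inj
  have hpos : 0 < #{x ∈ s | rk x = j} := card_pos.mpr ⟨x₀, by simp [hx₀, hj₀]⟩
  rw [card_erase_of_mem (by simp [hx₀, hj₀])] at hle
  omega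

theorem card_filter_le_card_filter_succ (h : IsSymmetricChainDecomposition s rk m c st)
    {j : ℕ} (hcard : #{x ∈ s | rk x = j} ≤ #{x ∈ s | rk x = j + 1}) {U : Set α}
    (hU : IsUpperSet U) [DecidablePred (· ∈ U)] :
    #{x ∈ s | x ∈ U ∧ rk x = j} ≤ #{x ∈ s | x ∈ U ∧ rk x = j + 1} := by
  obtain ⟨f, hf_inj, hf⟩ := h.exists_injOn_rank_eq (j := j) (t := j + 1) fun x hx hj =>
    ⟨(h.rank_bounds x hx).1.trans (by omega), h.rank_add_one_add_le hcard hx hj⟩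
  refine card_le_card_of_injOn f (fun x hx => ?_) (hf_inj.mono fun x hx => ?_)
  · simp only [coe_filter, Set.mem_ofPred_eq] at hx ⊢
    obtain ⟨hx, hxU, hj⟩ := hx
    obtain ⟨hfs, hfc, hfr⟩ := hf x hx hj
    exact ⟨hfs, hU (h.le_of_rank_le x hx (f x) hfs hfc.symm (by omega)) hxU, hfr⟩
  · simp only [coe_filter, Set.mem_ofPred_eq] at hx ⊢
    exact ⟨hx.1, hx.2.2⟩

theorem prod_range (h : IsSymmetricChainDecomposition s rk m c st) (q : ℕ) :
    IsSymmetricChainDecomposition (range q ×ˢ s) (fun p => p.1 + rk p.2) (q - 1 + m)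
      (fun p => (c p.2, min (rk p.2 - st (c p.2)) (q - 1 - p.1))) (fun i => st i.1 + i.2) where
  rank_bounds p hp := by
    dsimp only
    rw [mem_product, mem_range] at hp
    have := h.rank_bounds p.2 hp.2
    omega
  le_of_rank_le p hp p' hp' hc hr := by
    rw [mem_product, mem_range] at hp hp'
    simp only [Prod.mk.injEq] at hc hr
    obtain ⟨hc, hk⟩ := hc
    have hb := h.rank_bounds p.2 hp.2
    have hb' := h.rank_bounds p'.2 hp'.2
    rw [hc] at hb hk
    have hrk : rk p.2 ≤ rk p'.2 := by omega
    exact Prod.le_def.mpr ⟨by omega, h.le_of_rank_le _ hp.2 _ hp'.2 hc hrk⟩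
  exists_rank_eq p hp t ht₁ ht₂ := by
    dsimp only at ht₁ ht₂ ⊢
    rw [mem_product, mem_range] at hp
    have hb := h.rank_bounds p.2 hp.2
    set k := min (rk p.2 - st (c p.2)) (q - 1 - p.1)
    -- The chain labelled `(c p.2, k)` is a hook: with `u` steps up the chain of `p.2` and `v`
    -- steps up `range q`, it is `{min u (q - 1 - v) = k}`.
    obtain ⟨u, v, hv, hk, hu, huv⟩ : ∃ u v, v < q ∧ min u (q - 1 - v) = k ∧
        u + st (c p.2) + st (c p.2) ≤ m ∧ st (c p.2) + u + v = t := by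
      rcases le_or_gt (t - st (c p.2)) (q - 1) with hle | hlt
      · exact ⟨k, t - st (c p.2) - k, by omega, by omega, by omega, by omega⟩
      · exact ⟨k + (t - st (c p.2) - (q - 1)), q - 1 - k, by omega, by omega, by omega,
          by omega⟩
    obtain ⟨y, hy, hyc, hyr⟩ := h.exists_rank_eq p.2 hp.2 (st (c p.2) + u) (by omega) (by omega)
    refine ⟨(v, y), mem_product.mpr ⟨mem_range.mpr hv, hy⟩, ?_, ?_⟩
    · rw [Prod.mk.injEq, hyc, hyr]
      exact ⟨rfl, by omega⟩
    · simp only [hyr]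
      omega

theorem map (h : IsSymmetricChainDecomposition s rk m c st) (e : α ≃o β) :
    IsSymmetricChainDecomposition (s.map e.toEquiv.toEmbedding) (rk ∘ e.symm) m (c ∘ e.symm)
      st where
  rank_bounds y hy := h.rank_bounds _ (mem_map_equiv.mp hy)
  le_of_rank_le y hy y' hy' hc hr :=
    e.symm.le_iff_le.mp (h.le_of_rank_le _ (mem_map_equiv.mp hy) _ (mem_map_equiv.mp hy') hc hr)
  exists_rank_eq y hy t ht₁ ht₂ := by
    obtain ⟨x, hx, hxc, hxr⟩ := h.exists_rank_eq _ (mem_map_equiv.mp hy) t ht₁ ht₂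
    exact ⟨e x, mem_map_equiv.mpr (by simpa using hx), by simpa using hxc, by simpa using hxr⟩

end IsSymmetricChainDecomposition

theorem exists_isSymmetricChainDecomposition_piFinset_range :
    ∀ (n : ℕ) (a : Fin n → ℕ), ∃ (ι : Type) (c : (Fin n → ℕ) → ι) (st : ι → ℕ),
      IsSymmetricChainDecomposition (Fintype.piFinset fun i => range (a i))
        (fun x => ∑ i, x i) (∑ i, (a i - 1)) c st
  | 0, a => ⟨Unit, fun _ => (), fun _ => 0,
      { rank_bounds := by simp
        le_of_rank_le := fun x _ y _ _ _ => le_of_eq (Subsingleton.elim x y)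
        exists_rank_eq := fun x hx t _ ht => ⟨x, hx, rfl, by simp at ht ⊢; omega⟩ }⟩
  | n + 1, a => by
    obtain ⟨ι, c, st, h⟩ := exists_isSymmetricChainDecomposition_piFinset_range n (Fin.tail a)
    refine ⟨ι × ℕ, fun x => (c (Fin.tail x), min (∑ i, Fin.tail x i - st (c (Fin.tail x)))
      (a 0 - 1 - x 0)), fun i => st i.1 + i.2, ?_⟩
    convert (h.prod_range (a 0)).map (Fin.consOrderIso fun _ => ℕ) using 1
    · ext x
      simp [mem_map_equiv, Fin.forall_fin_succ, Fin.tail]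
    · funext x
      simp only [Fin.sum_univ_succ, Function.comp_apply]
      rfl
    · simp [Fin.sum_univ_succ, Fin.tail]
    · rfl

noncomputable def expBox {n : ℕ} (a : Fin n → ℕ) : Finset (Fin n →₀ ℕ) :=
  (Fintype.piFinset fun i => range (a i)).map Finsupp.equivFunOnFinite.symm.toEmbedding

section MonomialCompleteIntersection

variable {K : Type*} [Field K] {n : ℕ} (a : Fin n → ℕ)

@[simp]
theorem mem_expBox {d : Fin n →₀ ℕ} : d ∈ expBox a ↔ ∀ i, d i < a i := by
  simp [expBox, mem_map_equiv]

theorem exists_isSymmetricChainDecomposition_expBox :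
    ∃ (ι : Type) (c : (Fin n →₀ ℕ) → ι) (st : ι → ℕ),
      IsSymmetricChainDecomposition (expBox a) Finsupp.degree (∑ i, (a i - 1)) c st := by
  obtain ⟨ι, c, st, h⟩ := exists_isSymmetricChainDecomposition_piFinset_range n a
  refine ⟨ι, c ∘ Finsupp.orderIsoFunOnFinite, st, ?_⟩
  convert h.map Finsupp.orderIsoFunOnFinite.symm using 1
  · rfl
  · exact funext Finsupp.degree_eq_sum
  · rfl

variable (K) in
noncomputable abbrev xPowIdeal : Ideal (MvPolynomial (Fin n) K) :=
  Ideal.span (Set.range fun i => X i ^ a i)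

variable (K) in
noncomputable def stdMonomial (d : Fin n →₀ ℕ) : MvPolynomial (Fin n) K ⧸ xPowIdeal K a :=
  Ideal.Quotient.mk _ (monomial d 1)

theorem xPowIdeal_eq_span_monomial :
    xPowIdeal K a =
      Ideal.span ((monomial · (1 : K)) '' Set.range fun i => Finsupp.single i (a i)) := by
  simp only [xPowIdeal, ← Set.range_comp, Function.comp_def, X_pow_eq_monomial]

theorem mem_xPowIdeal_iff {p : MvPolynomial (Fin n) K} :
    p ∈ xPowIdeal K a ↔ ∀ d ∈ p.support, ∃ i, a i ≤ d i := by
  simp [xPowIdeal_eq_span_monomial, mem_ideal_span_monomial_image, Finsupp.single_le_iff]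

theorem mk_monomial_eq_zero {d : Fin n →₀ ℕ} (hd : d ∉ expBox a) (c : K) :
    Ideal.Quotient.mk (xPowIdeal K a) (monomial d c) = 0 := by
  rw [Ideal.Quotient.eq_zero_iff_mem, mem_xPowIdeal_iff]
  intro d' hd'
  rw [Finset.mem_singleton.mp (support_monomial_subset hd')]
  simpa using hd

theorem mk_mem_span_stdMonomial {T : Set (Fin n →₀ ℕ)} {p : MvPolynomial (Fin n) K}
    (hp : ∀ d ∈ p.support, d ∈ expBox a → d ∈ T) :
    Ideal.Quotient.mk (xPowIdeal K a) p ∈ Submodule.span K (stdMonomial K a '' T) := by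
  rw [← support_sum_monomial_coeff p, map_sum]
  refine Submodule.sum_mem _ fun d hd => ?_
  by_cases hbox : d ∈ expBox a
  · have hsmul : Ideal.Quotient.mk (xPowIdeal K a) (monomial d (coeff d p)) =
        coeff d p • stdMonomial K a d := by
      rw [stdMonomial, ← Ideal.Quotient.mkₐ_eq_mk K, ← map_smul, smul_monomial, smul_eq_mul,
        mul_one]
    rw [hsmul]
    exact Submodule.smul_mem _ _ (Submodule.subset_span ⟨d, hp d hd hbox, rfl⟩)
  · rw [mk_monomial_eq_zero a hbox]
    exact zero_mem _

theorem linearIndependent_stdMonomial :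
    LinearIndependent K fun d : expBox a => stdMonomial K a d := by
  have hmon : LinearIndependent K fun d : expBox a => monomial (d : Fin n →₀ ℕ) (1 : K) := by
    simpa [Function.comp_def] using
      (basisMonomials (Fin n) K).linearIndependent.comp _ Subtype.val_injective
  refine hmon.map (f := (Ideal.Quotient.mkₐ K (xPowIdeal K a)).toLinearMap) ?_
  rw [Submodule.disjoint_def]
  intro p hp hker
  have hsupp : ↑p.support ⊆ (expBox a : Set (Fin n →₀ ℕ)) := by
    rwa [show (fun d : expBox a => monomial (d : Fin n →₀ ℕ) (1 : K)) = (monomial · 1) ∘ (↑)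
      from rfl, Set.range_comp, Subtype.range_coe, ← restrictSupport_eq_span] at hp
  rw [LinearMap.mem_ker, AlgHom.toLinearMap_apply, Ideal.Quotient.mkₐ_eq_mk,
    Ideal.Quotient.eq_zero_iff_mem, mem_xPowIdeal_iff] at hker
  rw [← MvPolynomial.support_eq_empty, Finset.eq_empty_iff_forall_notMem]
  intro d hd
  obtain ⟨i, hi⟩ := hker d hd
  exact (((mem_expBox a).mp (hsupp hd)) i).not_ge hi

theorem finrank_span_stdMonomial {T : Finset (Fin n →₀ ℕ)} (hT : T ⊆ expBox a) :
    finrank K (Submodule.span K (stdMonomial K a '' T)) = #T := by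
  have hT : LinearIndependent K fun d : (T : Set (Fin n →₀ ℕ)) => stdMonomial K a d :=
    (linearIndependent_stdMonomial a).comp
      (Set.inclusion (coe_subset.mpr hT)) (Set.inclusion_injective _)
  rw [Set.image_eq_range, finrank_span_eq_card hT]
  simp

theorem degree_eq_of_mem_homogeneousSubmodule {p : MvPolynomial (Fin n) K} {t : ℕ}
    (hp : p ∈ homogeneousSubmodule (Fin n) K t) {d : Fin n →₀ ℕ} (hd : d ∈ p.support) :
    d.degree = t := by
  rw [homogeneousSubmodule_eq_finsupp_supported] at hp
  exact hp hd

theorem gradedPiece_xPowIdeal (t : ℕ) :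
    gradedPiece (xPowIdeal K a) t =
      Submodule.span K (stdMonomial K a '' ({d ∈ expBox a | d.degree = t} : Finset _)) := by
  apply le_antisymm
  · rintro _ ⟨p, hp, rfl⟩
    exact mk_mem_span_stdMonomial a fun d hd hbox =>
      mem_filter.mpr ⟨hbox, degree_eq_of_mem_homogeneousSubmodule hp hd⟩
  · rw [Submodule.span_le]
    rintro _ ⟨d, hd, rfl⟩
    exact ⟨monomial d 1, isHomogeneous_monomial _ (mem_filter.mp hd).2, rfl⟩

theorem span_mk_monomial_inf_gradedPiece (S : Set (Fin n →₀ ℕ))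
    [DecidablePred (· ∈ upperClosure S)] (t : ℕ) :
    (Ideal.span (Ideal.Quotient.mk (xPowIdeal K a) '' ((monomial · 1) '' S))).restrictScalars K ⊓
        gradedPiece (xPowIdeal K a) t =
      Submodule.span K (stdMonomial K a ''
        ({d ∈ expBox a | d ∈ upperClosure S ∧ d.degree = t} : Finset _)) := by
  apply le_antisymm
  · rintro _ ⟨hJ, p, hp, rfl⟩
    rw [SetLike.mem_coe, Submodule.restrictScalars_mem, AlgHom.toLinearMap_apply,
      Ideal.Quotient.mkₐ_eq_mk, ← Ideal.map_span, Ideal.mem_quotient_iff_mem_sup,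
      xPowIdeal_eq_span_monomial, ← Ideal.span_union, ← Set.image_union,
      mem_ideal_span_monomial_image] at hJ
    refine mk_mem_span_stdMonomial a fun d hd hbox => ?_
    obtain ⟨s, hs | ⟨i, rfl⟩, hsd⟩ := hJ d hd
    · exact mem_filter.mpr ⟨hbox, ⟨s, hs, hsd⟩, degree_eq_of_mem_homogeneousSubmodule hp hd⟩
    · exact absurd (Finsupp.single_le_iff.mp hsd) ((mem_expBox a).mp hbox i).not_ge
  · rw [Submodule.span_le]
    rintro _ ⟨d, hd, rfl⟩
    obtain ⟨-, ⟨s, hs, hsd⟩, hdeg⟩ := mem_filter.mp hd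
    refine ⟨?_, monomial d 1, isHomogeneous_monomial _ hdeg, rfl⟩
    rw [SetLike.mem_coe, Submodule.restrictScalars_mem, stdMonomial,
      show monomial d (1 : K) = monomial (d - s) 1 * monomial s 1 by
        rw [monomial_mul, one_mul, tsub_add_cancel_of_le hsd], map_mul]
    exact Ideal.mul_mem_left _ _ (Ideal.subset_span ⟨_, ⟨s, hs, rfl⟩, rfl⟩)

end MonomialCompleteIntersection

theorem monomial_ideal_hilbert_function_monotone_general
    {K : Type*} [Field K] {n : ℕ} (a : Fin n → ℕ)
    (b : Ideal (MvPolynomial (Fin n) K))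
    (hb : b = Ideal.span (Set.range fun i : Fin n => (X i : MvPolynomial (Fin n) K) ^ a i))
    (J : Ideal (MvPolynomial (Fin n) K ⧸ b)) (hJ : IsMonomialIdealOfQuotient b J)
    (j : ℕ) (hj : finrank K (gradedPiece b j) ≤ finrank K (gradedPiece b (j + 1))) :
    finrank K (J.restrictScalars K ⊓ gradedPiece b j : Submodule K _) ≤
      finrank K (J.restrictScalars K ⊓ gradedPiece b (j + 1) : Submodule K _) := by
  classical
  subst hb
  obtain ⟨M, hM, rfl⟩ := hJ
  obtain ⟨S, rfl⟩ := Set.subset_range_iff_exists_image_eq.mp fun p hp =>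
    (hM p hp).imp fun _ => Eq.symm
  rw [gradedPiece_xPowIdeal, gradedPiece_xPowIdeal, finrank_span_stdMonomial _ (filter_subset _ _),
    finrank_span_stdMonomial _ (filter_subset _ _)] at hj
  rw [span_mk_monomial_inf_gradedPiece, span_mk_monomial_inf_gradedPiece,
    finrank_span_stdMonomial _ (filter_subset _ _), finrank_span_stdMonomial _ (filter_subset _ _)]
  obtain ⟨ι, c, st, h⟩ := exists_isSymmetricChainDecomposition_expBox a
  exact h.card_filter_le_card_filter_succ hj (upperClosure S).upper

/-- **Hilbert functions of monomial ideals in a monomial complete intersection do not drop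
before the Hilbert function of the ring does.**  Let
`B = K[x_1,…,x_n]/(x_1^{a_1},…,x_n^{a_n})` and let `J ⊆ B` be a monomial ideal.  If
`dim_K B_j ≤ dim_K B_{j+1}`, then `H(J, j) ≤ H(J, j+1)`, where `H(J, i) = dim_K (J ∩ B_i)`. -/
theorem monomial_ideal_hilbert_function_monotone
    {K : Type*} [Field K] {n : ℕ} (a : Fin n → ℕ) (ha : ∀ i, 0 < a i)
    (b : Ideal (MvPolynomial (Fin n) K))
    (hb : b = Ideal.span (Set.range fun i : Fin n => (X i : MvPolynomial (Fin n) K) ^ a i))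
    (J : Ideal (MvPolynomial (Fin n) K ⧸ b)) (hJ : IsMonomialIdealOfQuotient b J)
    (j : ℕ) (hj : finrank K (gradedPiece b j) ≤ finrank K (gradedPiece b (j + 1))) :
    finrank K (J.restrictScalars K ⊓ gradedPiece b j : Submodule K _) ≤
      finrank K (J.restrictScalars K ⊓ gradedPiece b (j + 1) : Submodule K _) :=
  monomial_ideal_hilbert_function_monotone_general a b hb J hJ j hj
end
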